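/- arXiv:1912.11656 — 10 statements merged into one kernel-verified Lean document; each statement's English description precedes it below -/
import Mathlib

section
/- An interval matrix 𝐌 = [M̲, M̄] has the strong Monge property (every real matrix M with M̲ ≤ M ≤ M̄ is Monge) if and only if M̄_{ij} + M̄_{kl} ≤ M̲_{il} + M̲_{kj} for all 1 ≤ i < k ≤ m and 1 ≤ j < l ≤ n. -/
/-- A real matrix is Monge if `M i j + M k l ≤ M i l + M k j` for all `i < k`, `j < l`. -/
def Monge {m n : ℕ} (M : Matrix (Fin m) (Fin n) ℝ) : Prop :=
  ∀ i k : Fin m, ∀ j l : Fin n, i < k → j < l → M i j + M k l ≤ M i l + M k j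

/-- `M` belongs to the interval matrix `[L, U]`. -/
def InInterval {m n : ℕ} (L U M : Matrix (Fin m) (Fin n) ℝ) : Prop :=
  ∀ i j, L i j ≤ M i j ∧ M i j ≤ U i j

/-- The interval matrix `[L, U]` has the strong Monge property. -/
def StrongMonge {m n : ℕ} (L U : Matrix (Fin m) (Fin n) ℝ) : Prop :=
  ∀ M, InInterval L U M → Monge M

/-- The interval matrix `[L, U]` has the weak Monge property. -/
def WeakMonge {m n : ℕ} (L U : Matrix (Fin m) (Fin n) ℝ) : Prop :=
  ∃ M, InInterval L U M ∧ Monge M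

theorem strongMonge_iff {m n : ℕ} (L U : Matrix (Fin m) (Fin n) ℝ) (hLU : ∀ i j, L i j ≤ U i j) :
    StrongMonge L U ↔
      ∀ i k : Fin m, ∀ j l : Fin n, i < k → j < l →
        U i j + U k l ≤ L i l + L k j := by
  constructor
  · intro hS i k j l hik hjl
    set M : Matrix (Fin m) (Fin n) ℝ :=
      fun a b => if (a = i ∧ b = j) ∨ (a = k ∧ b = l) then U a b else L a b with hM
    have hIn : InInterval L U M := by
      intro a b
      by_cases h : (a = i ∧ b = j) ∨ (a = k ∧ b = l) <;>
        simp [hM, h, hLU a b, le_refl]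
    have := hS M hIn i k j l hik hjl
    have hne : i ≠ k := ne_of_lt hik
    have hne' : j ≠ l := ne_of_lt hjl
    simpa [hM, hne, hne', hne.symm, hne'.symm] using this
  · intro h M hIn i k j l hik hjl
    calc M i j + M k l ≤ U i j + U k l := add_le_add (hIn i j).2 (hIn k l).2
      _ ≤ L i l + L k j := h i k j l hik hjl
      _ ≤ M i l + M k j := add_le_add (hIn i l).1 (hIn k j).1
end

section
/- An interval matrix 𝐌 = [M̲, M̄] has the strong Monge property if and only if M̄_{i,j} + M̄_{i+1,j+1} ≤ M̲_{i,j+1} + M̲_{i+1,j} for all 1 ≤ i < m and 1 ≤ j < n. -/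
lemma monge_of_consecutive {m n : ℕ} (M : Matrix (Fin m) (Fin n) ℝ)
    (h : ∀ (i j : ℕ) (hi : i + 1 < m) (hj : j + 1 < n),
      M ⟨i, Nat.lt_of_succ_lt hi⟩ ⟨j, Nat.lt_of_succ_lt hj⟩ + M ⟨i + 1, hi⟩ ⟨j + 1, hj⟩ ≤
        M ⟨i, Nat.lt_of_succ_lt hi⟩ ⟨j + 1, hj⟩ + M ⟨i + 1, hi⟩ ⟨j, Nat.lt_of_succ_lt hj⟩) :
    Monge M := by
  -- Step 1: extend to arbitrary rows, consecutive columns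
  have step1 : ∀ (i k j : ℕ) (hi : i < m) (hk : k < m) (hj : j + 1 < n), i ≤ k →
      M ⟨i, hi⟩ ⟨j, Nat.lt_of_succ_lt hj⟩ + M ⟨k, hk⟩ ⟨j + 1, hj⟩ ≤
        M ⟨i, hi⟩ ⟨j + 1, hj⟩ + M ⟨k, hk⟩ ⟨j, Nat.lt_of_succ_lt hj⟩ := by
    intro i k j hi hk hj hik
    induction k, hik using Nat.le_induction with
    | base => exact le_of_eq (add_comm _ _)
    | succ k hik ih =>
      have hk' : k < m := Nat.lt_of_succ_lt hk
      have h1 := ih hk'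
      have h2 := h k j hk hj
      linarith
  -- Step 2: extend to arbitrary columns
  have step2 : ∀ (i k j l : ℕ) (hi : i < m) (hk : k < m) (hj : j < n) (hl : l < n),
      i ≤ k → j ≤ l →
      M ⟨i, hi⟩ ⟨j, hj⟩ + M ⟨k, hk⟩ ⟨l, hl⟩ ≤
        M ⟨i, hi⟩ ⟨l, hl⟩ + M ⟨k, hk⟩ ⟨j, hj⟩ := by
    intro i k j l hi hk hj hl hik hjl
    induction l, hjl using Nat.le_induction with
    | base => linarith
    | succ l hjl ih =>
      have hl' : l < n := Nat.lt_of_succ_lt hl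
      have h1 := ih hl'
      have h2 := step1 i k l hi hk hl hik
      linarith
  intro i k j l hik hjl
  have := step2 i.val k.val j.val l.val i.isLt k.isLt j.isLt l.isLt (le_of_lt hik) (le_of_lt hjl)
  simpa using this

theorem strongMonge_iff_consecutive {m n : ℕ} (L U : Matrix (Fin m) (Fin n) ℝ)
    (hLU : ∀ i j, L i j ≤ U i j) :
    StrongMonge L U ↔
      ∀ (i j : ℕ) (hi : i + 1 < m) (hj : j + 1 < n),
        U ⟨i, Nat.lt_of_succ_lt hi⟩ ⟨j, Nat.lt_of_succ_lt hj⟩ + U ⟨i + 1, hi⟩ ⟨j + 1, hj⟩ ≤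
          L ⟨i, Nat.lt_of_succ_lt hi⟩ ⟨j + 1, hj⟩ + L ⟨i + 1, hi⟩ ⟨j, Nat.lt_of_succ_lt hj⟩ := by
  constructor
  · intro hSM i j hi hj
    set M : Matrix (Fin m) (Fin n) ℝ := fun a b =>
      if (a.val = i ∧ b.val = j) ∨ (a.val = i + 1 ∧ b.val = j + 1) then U a b else L a b with hM
    have hMem : InInterval L U M := by
      intro a b
      simp only [hM]
      split
      · exact ⟨hLU a b, le_refl _⟩
      · exact ⟨le_refl _, hLU a b⟩
    have hMonge := hSM M hMem ⟨i, Nat.lt_of_succ_lt hi⟩ ⟨i + 1, hi⟩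
      ⟨j, Nat.lt_of_succ_lt hj⟩ ⟨j + 1, hj⟩ (by simp [Fin.lt_def]) (by simp [Fin.lt_def])
    simp only [hM] at hMonge
    rw [if_pos (by simp), if_pos (by simp), if_neg (by omega), if_neg (by omega)] at hMonge
    exact hMonge
  · intro hcons M hMem
    apply monge_of_consecutive
    intro i j hi hj
    have h1 := hMem ⟨i, Nat.lt_of_succ_lt hi⟩ ⟨j, Nat.lt_of_succ_lt hj⟩
    have h2 := hMem ⟨i + 1, hi⟩ ⟨j + 1, hj⟩
    have h3 := hMem ⟨i, Nat.lt_of_succ_lt hi⟩ ⟨j + 1, hj⟩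
    have h4 := hMem ⟨i + 1, hi⟩ ⟨j, Nat.lt_of_succ_lt hj⟩
    have h5 := hcons i j hi hj
    linarith [h1.2, h2.2, h3.1, h4.1]
end

section
/- An interval matrix 𝐌 = [M̲, M̄] has the strong Monge property if and only if both corner matrices ↓M and ↑M are Monge, where (↑M)_{ij} = M̄_{ij} if i+j is even and M̲_{ij} if i+j is odd, and (↓M)_{ij} = M̲_{ij} if i+j is even and M̄_{ij} if i+j is odd. -/
lemma keyNat (f g : ℕ → ℕ → ℝ) (m n : ℕ)
    (hfg : ∀ i j, i < m → j < n → f i j ≤ g i j)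
    (hadj : ∀ i j, i + 1 < m → j + 1 < n →
      g i j + g (i+1) (j+1) ≤ f i (j+1) + f (i+1) j) :
    ∀ k l i j, k < m → l < n → i < k → j < l → g i j + g k l ≤ f i l + f k j := by
  have col : ∀ i, i + 1 < m → ∀ l, l < n → ∀ j, j < l →
      g i j + g (i+1) l ≤ f i l + f (i+1) j := by
    intro i hi l
    induction l with
    | zero => intro _ j hj; exact absurd hj (Nat.not_lt_zero j)
    | succ l ih =>
      intro hl j hj
      rcases Nat.lt_succ_iff_lt_or_eq.mp hj with h | h
      · have h1 := ih (by omega) j h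
        have h2 := hadj i l hi hl
        have h3 := hfg i l (by omega) (by omega)
        have h4 := hfg (i+1) l (by omega) (by omega)
        linarith
      · subst h; exact hadj i j hi hl
  intro k
  induction k with
  | zero => intro l i j _ _ hik; exact absurd hik (Nat.not_lt_zero i)
  | succ k ih =>
    intro l i j hk hl hik hjl
    rcases Nat.lt_succ_iff_lt_or_eq.mp hik with h | h
    · have h1 := ih l i j (by omega) hl h hjl
      have h2 := col k hk l hl j hjl
      have h3 := hfg k l (by omega) hl
      have h4 := hfg k j (by omega) (by omega)
      linarith
    · subst h; exact col i hk l hl j hjl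

theorem strongMonge_iff_corner {m n : ℕ} (L U : Matrix (Fin m) (Fin n) ℝ)
    (hLU : ∀ i j, L i j ≤ U i j) :
    StrongMonge L U ↔
      (Monge (Matrix.of fun (i : Fin m) (j : Fin n) =>
          if (i.val + j.val) % 2 = 0 then L i j else U i j) ∧
        Monge (Matrix.of fun (i : Fin m) (j : Fin n) =>
          if (i.val + j.val) % 2 = 0 then U i j else L i j)) := by
  constructor
  · intro h
    constructor
    · apply h
      intro i j
      simp only [Matrix.of_apply]
      split
      · exact ⟨le_refl _, hLU i j⟩
      · exact ⟨hLU i j, le_refl _⟩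
    · apply h
      intro i j
      simp only [Matrix.of_apply]
      split
      · exact ⟨hLU i j, le_refl _⟩
      · exact ⟨le_refl _, hLU i j⟩
  · rintro ⟨hdown, hup⟩ M hM i k j l hik hjl
    set f : ℕ → ℕ → ℝ := fun a b => if h : a < m ∧ b < n then L ⟨a, h.1⟩ ⟨b, h.2⟩ else 0 with hf
    set g : ℕ → ℕ → ℝ := fun a b => if h : a < m ∧ b < n then U ⟨a, h.1⟩ ⟨b, h.2⟩ else 0 with hg
    have hfg : ∀ i j, i < m → j < n → f i j ≤ g i j := by
      intro a b ha hb
      simp only [hf, hg, dif_pos (⟨ha, hb⟩ : a < m ∧ b < n)]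
      exact hLU _ _
    have hadj : ∀ a b, a + 1 < m → b + 1 < n →
        g a b + g (a+1) (b+1) ≤ f a (b+1) + f (a+1) b := by
      intro a b ha hb
      have ha' : a < m := by omega
      have hb' : b < n := by omega
      simp only [hf, hg, dif_pos (⟨ha', hb'⟩ : a < m ∧ b < n),
        dif_pos (⟨ha, hb⟩ : a + 1 < m ∧ b + 1 < n),
        dif_pos (⟨ha', hb⟩ : a < m ∧ b + 1 < n),
        dif_pos (⟨ha, hb'⟩ : a + 1 < m ∧ b < n)]
      rcases Nat.even_or_odd (a + b) with hpar | hpar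
      · have h0 : (a + b) % 2 = 0 := Nat.even_iff.mp hpar
        have := hup ⟨a, ha'⟩ ⟨a+1, ha⟩ ⟨b, hb'⟩ ⟨b+1, hb⟩
          (by simp [Fin.lt_def]) (by simp [Fin.lt_def])
        simp only [Matrix.of_apply] at this
        rw [if_pos h0, if_pos (by omega : (a+1 + (b+1)) % 2 = 0),
          if_neg (by omega : ¬ (a + (b+1)) % 2 = 0),
          if_neg (by omega : ¬ (a+1 + b) % 2 = 0)] at this
        exact this
      · have h0 : (a + b) % 2 = 1 := Nat.odd_iff.mp hpar
        have := hdown ⟨a, ha'⟩ ⟨a+1, ha⟩ ⟨b, hb'⟩ ⟨b+1, hb⟩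
          (by simp [Fin.lt_def]) (by simp [Fin.lt_def])
        simp only [Matrix.of_apply] at this
        rw [if_neg (by omega : ¬ (a + b) % 2 = 0),
          if_neg (by omega : ¬ (a+1 + (b+1)) % 2 = 0),
          if_pos (by omega : (a + (b+1)) % 2 = 0),
          if_pos (by omega : (a+1 + b) % 2 = 0)] at this
        exact this
    have key := keyNat f g m n hfg hadj k.val l.val i.val j.val k.isLt l.isLt hik hjl
    simp only [hf, hg, dif_pos (⟨i.isLt, j.isLt⟩ : i.val < m ∧ j.val < n),
      dif_pos (⟨k.isLt, l.isLt⟩ : k.val < m ∧ l.val < n),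
      dif_pos (⟨i.isLt, l.isLt⟩ : i.val < m ∧ l.val < n),
      dif_pos (⟨k.isLt, j.isLt⟩ : k.val < m ∧ j.val < n), Fin.eta] at key
    have h1 := hM i j
    have h2 := hM k l
    have h3 := hM i l
    have h4 := hM k j
    linarith
end

section
/- Let 𝐌 ∈ 𝕀ℝ^{m×n} be an interval matrix with center M^C and radius M^Δ, and let M^R ∈ ℝ^{(m−1)×(n−1)} be the residual matrix of M^C, i.e., M^R_{ij} = M^C_{i+1,j} + M^C_{i,j+1} − M^C_{ij} − M^C_{i+1,j+1}. If for all i, j it holds that M^Δ_{ij} ≥ |Σ_{k=i}^{m−1} Σ_{l=j}^{n−1} M^R_{kl}|, then 𝐌 has the weak Monge property. -/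
private lemma tele_sum (f : ℕ → ℝ) {a b : ℕ} (h : a ≤ b) :
    ∑ q ∈ Finset.Ico a b, (f q - f (q + 1)) = f a - f b := by
  induction b, h using Nat.le_induction with
  | base => simp
  | succ b hb ih =>
      rw [Finset.sum_Ico_succ_top (by omega), ih]; ring

theorem weakMonge_of_radius_ge_residual_sums {m n : ℕ} (L U : Matrix (Fin m) (Fin n) ℝ)
    (C Δ : Matrix (Fin m) (Fin n) ℝ)
    (hC : ∀ i j, C i j = (L i j + U i j) / 2)
    (hΔ : ∀ i j, Δ i j = (U i j - L i j) / 2)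
    (R : ℕ → ℕ → ℝ)
    (hR : ∀ (k l : ℕ) (hk : k + 1 < m) (hl : l + 1 < n),
      R k l =
        C ⟨k + 1, hk⟩ ⟨l, Nat.lt_of_succ_lt hl⟩ + C ⟨k, Nat.lt_of_succ_lt hk⟩ ⟨l + 1, hl⟩ -
          C ⟨k, Nat.lt_of_succ_lt hk⟩ ⟨l, Nat.lt_of_succ_lt hl⟩ - C ⟨k + 1, hk⟩ ⟨l + 1, hl⟩)
    (hcond : ∀ (i : Fin m) (j : Fin n),
      |∑ k ∈ Finset.Ico i.val (m - 1), ∑ l ∈ Finset.Ico j.val (n - 1), R k l| ≤ Δ i j) :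
    WeakMonge L U := by
  classical
  -- extension of C to ℕ × ℕ
  set c : ℕ → ℕ → ℝ := fun p q =>
    if h : p < m ∧ q < n then C ⟨p, h.1⟩ ⟨q, h.2⟩ else 0 with hc_def
  have hc : ∀ (p q : ℕ) (hp : p < m) (hq : q < n), c p q = C ⟨p, hp⟩ ⟨q, hq⟩ := by
    intro p q hp hq
    simp [hc_def, hp, hq]
  have hRc : ∀ p q : ℕ, p + 1 < m → q + 1 < n →
      R p q = (c (p + 1) q - c p q) - (c (p + 1) (q + 1) - c p (q + 1)) := by
    intro p q hp hq
    rw [hR p q hp hq, hc _ _ hp (Nat.lt_of_succ_lt hq), hc _ _ (Nat.lt_of_succ_lt hp) hq,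
      hc _ _ (Nat.lt_of_succ_lt hp) (Nat.lt_of_succ_lt hq), hc _ _ hp hq]
    ring
  -- key rectangle sum identity
  have key : ∀ i k j l : ℕ, i ≤ k → j ≤ l → k < m → l < n →
      ∑ p ∈ Finset.Ico i k, ∑ q ∈ Finset.Ico j l, R p q
        = c i l + c k j - c i j - c k l := by
    intro i k j l hik hjl hkm hln
    have inner : ∀ p ∈ Finset.Ico i k,
        ∑ q ∈ Finset.Ico j l, R p q
          = (c (p + 1) j - c p j) - (c (p + 1) l - c p l) := by
      intro p hp
      have hpk : p < k := (Finset.mem_Ico.mp hp).2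
      have hpm : p + 1 < m := by omega
      have h1 : ∀ q ∈ Finset.Ico j l,
          R p q = (fun q => c (p + 1) q - c p q) q - (fun q => c (p + 1) q - c p q) (q + 1) :=
        by
        intro q hq
        have hql : q < l := (Finset.mem_Ico.mp hq).2
        have hqn : q + 1 < n := by omega
        simp only
        rw [hRc p q hpm hqn]
      rw [Finset.sum_congr rfl h1, tele_sum _ hjl]
    rw [Finset.sum_congr rfl inner]
    have h2 : ∀ p ∈ Finset.Ico i k,
        (c (p + 1) j - c p j) - (c (p + 1) l - c p l)
          = (fun p => c p l - c p j) p - (fun p => c p l - c p j) (p + 1) := by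
      intro p _; simp only; ring
    rw [Finset.sum_congr rfl h2, tele_sum _ hik]
    ring
  -- the candidate Monge matrix
  set S : ℕ → ℕ → ℝ := fun a b =>
    ∑ p ∈ Finset.Ico a (m - 1), ∑ q ∈ Finset.Ico b (n - 1), R p q with hS_def
  refine ⟨fun i j => C i j + S i.val j.val, ?_, ?_⟩
  · intro i j
    have h := hcond i j
    rw [hΔ, abs_le] at h
    have hCij := hC i j
    have hs : S (i : ℕ) (j : ℕ)
        = ∑ k ∈ Finset.Ico (i : ℕ) (m - 1), ∑ l ∈ Finset.Ico (j : ℕ) (n - 1), R k l := rfl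
    constructor <;> simp only <;> linarith [h.1, h.2, hs]
  · intro i k j l hik hjl
    simp only
    -- sums over rows split
    have hkm1 : (k : ℕ) ≤ m - 1 := by omega
    have hln1 : (l : ℕ) ≤ n - 1 := by omega
    have colsplit : ∀ (a : ℕ) (p : ℕ),
        ∑ q ∈ Finset.Ico (j : ℕ) (n - 1), R p q
          = (∑ q ∈ Finset.Ico (j : ℕ) (l : ℕ), R p q)
            + ∑ q ∈ Finset.Ico (l : ℕ) (n - 1), R p q := by
      intro a p
      rw [Finset.sum_Ico_consecutive _ (le_of_lt hjl) hln1]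
    have hSj : ∀ a : ℕ, S a (j : ℕ) - S a (l : ℕ)
        = ∑ p ∈ Finset.Ico a (m - 1), ∑ q ∈ Finset.Ico (j : ℕ) (l : ℕ), R p q := by
      intro a
      rw [hS_def]
      simp only
      rw [← Finset.sum_sub_distrib]
      refine Finset.sum_congr rfl fun p _ => ?_
      rw [colsplit a p]; ring
    have rowsplit :
        ∑ p ∈ Finset.Ico (i : ℕ) (m - 1), ∑ q ∈ Finset.Ico (j : ℕ) (l : ℕ), R p q
          = (∑ p ∈ Finset.Ico (i : ℕ) (k : ℕ), ∑ q ∈ Finset.Ico (j : ℕ) (l : ℕ), R p q)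
            + ∑ p ∈ Finset.Ico (k : ℕ) (m - 1), ∑ q ∈ Finset.Ico (j : ℕ) (l : ℕ), R p q := by
      rw [Finset.sum_Ico_consecutive _ (le_of_lt hik) hkm1]
    have hSdiff : S (i : ℕ) (j : ℕ) + S (k : ℕ) (l : ℕ) - S (i : ℕ) (l : ℕ) - S (k : ℕ) (j : ℕ)
        = ∑ p ∈ Finset.Ico (i : ℕ) (k : ℕ), ∑ q ∈ Finset.Ico (j : ℕ) (l : ℕ), R p q := by
      have h1 := hSj (i : ℕ)
      have h2 := hSj (k : ℕ)
      have := rowsplit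
      linarith
    have hkey := key i k j l (le_of_lt hik) (le_of_lt hjl) k.isLt l.isLt
    have hCdiff : C i j + C k l - C i l - C k j
        = -(c (i : ℕ) (l : ℕ) + c (k : ℕ) (j : ℕ) - c (i : ℕ) (j : ℕ) - c (k : ℕ) (l : ℕ)) := by
      rw [hc _ _ i.isLt l.isLt, hc _ _ k.isLt j.isLt, hc _ _ i.isLt j.isLt, hc _ _ k.isLt l.isLt]
      simp only [Fin.eta]
      ring
    have : C i j + S (i : ℕ) (j : ℕ) + (C k l + S (k : ℕ) (l : ℕ))
        = C i l + S (i : ℕ) (l : ℕ) + (C k j + S (k : ℕ) (j : ℕ)) := by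
      have e1 : S (i : ℕ) (j : ℕ) + S (k : ℕ) (l : ℕ) - S (i : ℕ) (l : ℕ) - S (k : ℕ) (j : ℕ)
          = c (i : ℕ) (l : ℕ) + c (k : ℕ) (j : ℕ) - c (i : ℕ) (j : ℕ) - c (k : ℕ) (l : ℕ) := by
        rw [hSdiff, hkey]
      linarith [hCdiff, e1]
    linarith
end

section
/- Let 𝐌 be a nonnegative interval matrix with the strong Monge property and let 𝛂 = [α̲, ᾱ] be a nonnegative interval with center α^C > 0 and radius α^Δ. Then the interval matrix 𝛂𝐌 (with entries [α̲·M̲_{ij}, ᾱ·M̄_{ij}]) has the strong Monge property if and only if α^Δ/α^C ≤ min over i,j of (M̲_{i,j+1} + M̲_{i+1,j} − M̄_{ij} − M̄_{i+1,j+1})/(M̲_{i,j+1} + M̲_{i+1,j} + M̄_{ij} + M̄_{i+1,j+1}), where the minimum is taken over 1 ≤ i < m, 1 ≤ j < n with positive denominators. -/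
lemma monge_of_adj {m n : ℕ} (M : Matrix (Fin m) (Fin n) ℝ)
    (adj : ∀ (i j : ℕ) (hi : i + 1 < m) (hj : j + 1 < n),
      M ⟨i, Nat.lt_of_succ_lt hi⟩ ⟨j, Nat.lt_of_succ_lt hj⟩ + M ⟨i+1, hi⟩ ⟨j+1, hj⟩ ≤
      M ⟨i, Nat.lt_of_succ_lt hi⟩ ⟨j+1, hj⟩ + M ⟨i+1, hi⟩ ⟨j, Nat.lt_of_succ_lt hj⟩) :
    Monge M := by
  have key1 : ∀ (i : ℕ) (hi : i + 1 < m) (d j : ℕ) (hd : j + d + 1 < n),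
      M ⟨i, Nat.lt_of_succ_lt hi⟩ ⟨j, by omega⟩ + M ⟨i+1, hi⟩ ⟨j+d+1, hd⟩ ≤
      M ⟨i, Nat.lt_of_succ_lt hi⟩ ⟨j+d+1, hd⟩ + M ⟨i+1, hi⟩ ⟨j, by omega⟩ := by
    intro i hi d
    induction d with
    | zero => intro j hd; exact adj i j hi hd
    | succ d ih =>
      intro j hd
      have h1 := ih j (by omega)
      have h2 := adj i (j+d+1) hi (by omega)
      have e : (⟨j+(d+1)+1, hd⟩ : Fin n) = ⟨j+d+1+1, by omega⟩ := Fin.ext (by simp; omega)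
      rw [e]
      linarith
  have key1' : ∀ (i : ℕ) (hi : i + 1 < m) (j l : Fin n), j < l →
      M ⟨i, Nat.lt_of_succ_lt hi⟩ j + M ⟨i+1, hi⟩ l ≤
      M ⟨i, Nat.lt_of_succ_lt hi⟩ l + M ⟨i+1, hi⟩ j := by
    intro i hi j l hjl
    have hjl' : j.val < l.val := hjl
    have hl : l = ⟨j.val + (l.val - j.val - 1) + 1, by omega⟩ := Fin.ext (by simp; omega)
    rw [hl]
    exact key1 i hi (l.val - j.val - 1) j.val (by omega)
  have key2 : ∀ (d i : ℕ) (hi : i + d + 1 < m) (j l : Fin n), j < l →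
      M ⟨i, by omega⟩ j + M ⟨i+d+1, hi⟩ l ≤ M ⟨i, by omega⟩ l + M ⟨i+d+1, hi⟩ j := by
    intro d
    induction d with
    | zero => intro i hi j l hjl; exact key1' i hi j l hjl
    | succ d ih =>
      intro i hi j l hjl
      have h1 := ih i (by omega) j l hjl
      have h2 := key1' (i+d+1) (by omega : i+d+1+1 < m) j l hjl
      have e : (⟨i+(d+1)+1, hi⟩ : Fin m) = ⟨i+d+1+1, by omega⟩ := Fin.ext (by simp; omega)
      rw [e]
      linarith
  intro i k j l hik hjl
  have hik' : i.val < k.val := hik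
  have hk : k = ⟨i.val + (k.val - i.val - 1) + 1, by omega⟩ := Fin.ext (by simp; omega)
  rw [hk]
  exact key2 (k.val - i.val - 1) i.val (by omega) j l hjl

lemma adj_of_strongMonge {m n : ℕ} (L U : Matrix (Fin m) (Fin n) ℝ)
    (hLU : ∀ i j, L i j ≤ U i j) (h : StrongMonge L U)
    (i j : ℕ) (hi : i + 1 < m) (hj : j + 1 < n) :
    U ⟨i, Nat.lt_of_succ_lt hi⟩ ⟨j, Nat.lt_of_succ_lt hj⟩ + U ⟨i+1, hi⟩ ⟨j+1, hj⟩ ≤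
    L ⟨i, Nat.lt_of_succ_lt hi⟩ ⟨j+1, hj⟩ + L ⟨i+1, hi⟩ ⟨j, Nat.lt_of_succ_lt hj⟩ := by
  set i0 : Fin m := ⟨i, Nat.lt_of_succ_lt hi⟩ with hi0
  set i1 : Fin m := ⟨i+1, hi⟩ with hi1
  set j0 : Fin n := ⟨j, Nat.lt_of_succ_lt hj⟩ with hj0
  set j1 : Fin n := ⟨j+1, hj⟩ with hj1
  have hii : i0 ≠ i1 := by simp [hi0, hi1, Fin.ext_iff]
  have hjj : j0 ≠ j1 := by simp [hj0, hj1, Fin.ext_iff]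
  set M : Matrix (Fin m) (Fin n) ℝ :=
    fun a b => if (a = i0 ∧ b = j0) ∨ (a = i1 ∧ b = j1) then U a b else L a b with hM
  have hMI : InInterval L U M := by
    intro a b
    simp only [hM]
    split
    · exact ⟨hLU a b, le_rfl⟩
    · exact ⟨le_rfl, hLU a b⟩
  have hmonge := h M hMI i0 i1 j0 j1 (by simp [hi0, hi1, Fin.lt_def])
    (by simp [hj0, hj1, Fin.lt_def])
  have e1 : M i0 j0 = U i0 j0 := by simp [hM]
  have e2 : M i1 j1 = U i1 j1 := by simp [hM]
  have e3 : M i0 j1 = L i0 j1 := by simp [hM, hii.symm, hjj, hjj.symm, hii]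
  have e4 : M i1 j0 = L i1 j0 := by simp [hM, hii.symm, hjj, hjj.symm, hii]
  rw [e1, e2, e3, e4] at hmonge
  exact hmonge

theorem strongMonge_interval_smul_iff {m n : ℕ} (L U : Matrix (Fin m) (Fin n) ℝ)
    (hL : ∀ i j, 0 ≤ L i j) (hLU : ∀ i j, L i j ≤ U i j)
    (hSM : StrongMonge L U)
    (al au : ℝ) (hal : 0 ≤ al) (halau : al ≤ au) (hc : 0 < (al + au) / 2) :
    StrongMonge (Matrix.of fun i j => al * L i j) (Matrix.of fun i j => au * U i j) ↔
      ∀ (i j : ℕ) (hi : i + 1 < m) (hj : j + 1 < n),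
        0 < L ⟨i, Nat.lt_of_succ_lt hi⟩ ⟨j + 1, hj⟩ + L ⟨i + 1, hi⟩ ⟨j, Nat.lt_of_succ_lt hj⟩ +
            U ⟨i, Nat.lt_of_succ_lt hi⟩ ⟨j, Nat.lt_of_succ_lt hj⟩ + U ⟨i + 1, hi⟩ ⟨j + 1, hj⟩ →
          ((au - al) / 2) / ((al + au) / 2) ≤
            (L ⟨i, Nat.lt_of_succ_lt hi⟩ ⟨j + 1, hj⟩ + L ⟨i + 1, hi⟩ ⟨j, Nat.lt_of_succ_lt hj⟩ -
                U ⟨i, Nat.lt_of_succ_lt hi⟩ ⟨j, Nat.lt_of_succ_lt hj⟩ - U ⟨i + 1, hi⟩ ⟨j + 1, hj⟩) /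
              (L ⟨i, Nat.lt_of_succ_lt hi⟩ ⟨j + 1, hj⟩ + L ⟨i + 1, hi⟩ ⟨j, Nat.lt_of_succ_lt hj⟩ +
                U ⟨i, Nat.lt_of_succ_lt hi⟩ ⟨j, Nat.lt_of_succ_lt hj⟩ + U ⟨i + 1, hi⟩ ⟨j + 1, hj⟩) := by
  have hau : 0 < au := by linarith
  have hU : ∀ i j, 0 ≤ U i j := fun i j => le_trans (hL i j) (hLU i j)
  have hLU' : ∀ i j, (Matrix.of fun i j => al * L i j) i j ≤
      (Matrix.of fun i j => au * U i j) i j := by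
    intro i j
    simp only [Matrix.of_apply]
    exact mul_le_mul halau (hLU i j) (hL i j) (le_of_lt hau)
  constructor
  · intro hS i j hi hj hpos
    have hadj := adj_of_strongMonge _ _ hLU' hS i j hi hj
    simp only [Matrix.of_apply] at hadj
    rw [div_le_div_iff₀ hc hpos]
    nlinarith [hadj]
  · intro hcond M hMI
    apply monge_of_adj
    intro i j hi hj
    have hb1 := hMI ⟨i, Nat.lt_of_succ_lt hi⟩ ⟨j, Nat.lt_of_succ_lt hj⟩
    have hb2 := hMI ⟨i+1, hi⟩ ⟨j+1, hj⟩
    have hb3 := hMI ⟨i, Nat.lt_of_succ_lt hi⟩ ⟨j+1, hj⟩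
    have hb4 := hMI ⟨i+1, hi⟩ ⟨j, Nat.lt_of_succ_lt hj⟩
    simp only [Matrix.of_apply] at hb1 hb2 hb3 hb4
    have hadjLU := adj_of_strongMonge L U hLU hSM i j hi hj
    have key : au * (U ⟨i, Nat.lt_of_succ_lt hi⟩ ⟨j, Nat.lt_of_succ_lt hj⟩ +
        U ⟨i+1, hi⟩ ⟨j+1, hj⟩) ≤
        al * (L ⟨i, Nat.lt_of_succ_lt hi⟩ ⟨j+1, hj⟩ + L ⟨i+1, hi⟩ ⟨j, Nat.lt_of_succ_lt hj⟩) := by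
      by_cases hpos : 0 < L ⟨i, Nat.lt_of_succ_lt hi⟩ ⟨j + 1, hj⟩ +
          L ⟨i + 1, hi⟩ ⟨j, Nat.lt_of_succ_lt hj⟩ +
          U ⟨i, Nat.lt_of_succ_lt hi⟩ ⟨j, Nat.lt_of_succ_lt hj⟩ + U ⟨i + 1, hi⟩ ⟨j + 1, hj⟩
      · have h := hcond i j hi hj hpos
        rw [div_le_div_iff₀ hc hpos] at h
        nlinarith [h]
      · push_neg at hpos
        have h1 := hL ⟨i, Nat.lt_of_succ_lt hi⟩ ⟨j+1, hj⟩
        have h2 := hL ⟨i+1, hi⟩ ⟨j, Nat.lt_of_succ_lt hj⟩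
        have h3 := hU ⟨i, Nat.lt_of_succ_lt hi⟩ ⟨j, Nat.lt_of_succ_lt hj⟩
        have h4 := hU ⟨i+1, hi⟩ ⟨j+1, hj⟩
        have eU : U ⟨i, Nat.lt_of_succ_lt hi⟩ ⟨j, Nat.lt_of_succ_lt hj⟩ +
            U ⟨i+1, hi⟩ ⟨j+1, hj⟩ = 0 := by linarith
        have eL : L ⟨i, Nat.lt_of_succ_lt hi⟩ ⟨j+1, hj⟩ +
            L ⟨i+1, hi⟩ ⟨j, Nat.lt_of_succ_lt hj⟩ = 0 := by linarith
        rw [eU, eL]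
        simp
    linarith [hb1.2, hb2.2, hb3.1, hb4.1]
end

section
/- If interval matrices 𝐌 and 𝐍 of the same size both have the weak Monge property, then 𝐌 + 𝐍 has the weak Monge property; similarly, α𝐌 has the weak Monge property for any real α ≥ 0. -/
theorem weakMonge_add_smul {m n : ℕ} (L U L' U' : Matrix (Fin m) (Fin n) ℝ)
    (hM : WeakMonge L U) (hN : WeakMonge L' U') (α : ℝ) (hα : 0 ≤ α) :
    WeakMonge (L + L') (U + U') ∧ WeakMonge (α • L) (α • U) := by
  obtain ⟨M, hMi, hMm⟩ := hM
  obtain ⟨N, hNi, hNm⟩ := hN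
  constructor
  · exact ⟨M + N, fun i j => ⟨add_le_add (hMi i j).1 (hNi i j).1,
      add_le_add (hMi i j).2 (hNi i j).2⟩,
      fun i k j l hik hjl => by
        have h1 := hMm i k j l hik hjl
        have h2 := hNm i k j l hik hjl
        simp only [Matrix.add_apply]; linarith⟩
  · exact ⟨α • M, fun i j => ⟨mul_le_mul_of_nonneg_left (hMi i j).1 hα,
      mul_le_mul_of_nonneg_left (hMi i j).2 hα⟩,
      fun i k j l hik hjl => by
        have h1 := hMm i k j l hik hjl
        simp only [Matrix.smul_apply, smul_eq_mul]
        nlinarith⟩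
end

section
/- If 𝐌 has the strong Monge property and 𝐍 has the weak Monge property (same size), and the entrywise intersection 𝐌 ∩ 𝐍 is nonempty in every entry, then 𝐌 ∩ 𝐍 has the weak Monge property. -/
theorem weakMonge_inter {m n : ℕ} (L U L' U' : Matrix (Fin m) (Fin n) ℝ)
    (hM : StrongMonge L U) (hN : WeakMonge L' U')
    (hLU : ∀ i j, L i j ≤ U i j)
    (hint : ∀ i j, max (L i j) (L' i j) ≤ min (U i j) (U' i j)) :
    WeakMonge (Matrix.of fun i j => max (L i j) (L' i j))
      (Matrix.of fun i j => min (U i j) (U' i j)) := by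
  obtain ⟨N, hNin, -⟩ := hN
  set M : Matrix (Fin m) (Fin n) ℝ :=
    Matrix.of fun i j => max (L i j) (min (N i j) (U i j)) with hMdef
  have hMLU : InInterval L U M := by
    intro i j
    refine ⟨le_max_left _ _, max_le (hLU i j) (min_le_right _ _)⟩
  refine ⟨M, ?_, hM M hMLU⟩
  intro i j
  have h1 := (hNin i j).1
  have h2 := (hNin i j).2
  have h3 := hint i j
  have hLU' : L i j ≤ U' i j := le_trans (le_trans (le_max_left _ _) h3) (min_le_right _ _)
  have hL'U : L' i j ≤ U i j := le_trans (le_trans (le_max_right _ _) h3) (min_le_left _ _)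
  constructor
  · exact max_le (le_max_left _ _)
      (le_max_of_le_right (le_min h1 hL'U))
  · exact le_min (max_le (hLU i j) (min_le_right _ _))
      (max_le hLU' (le_trans (min_le_left _ _) h2))
end

section
/- If 𝐌 has the strong Monge property and 𝐍 has the weak Monge property (same size), then 𝐌 + 𝐍 has the weak Monge property. -/
theorem weakMonge_add_strong {m n : ℕ} (L U L' U' : Matrix (Fin m) (Fin n) ℝ)
    (hM : StrongMonge L U) (hLU : ∀ i j, L i j ≤ U i j) (hN : WeakMonge L' U') :
    WeakMonge (L + L') (U + U') := by
  obtain ⟨N, hNin, hNm⟩ := hN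
  have hLin : InInterval L U L := fun i j => ⟨le_refl _, hLU i j⟩
  have hLm : Monge L := hM L hLin
  refine ⟨L + N, fun i j => ?_, fun i k j l hik hjl => ?_⟩
  · exact ⟨add_le_add le_rfl (hNin i j).1, add_le_add (hLU i j) (hNin i j).2⟩
  · have h1 := hLm i k j l hik hjl
    have h2 := hNm i k j l hik hjl
    simp only [Matrix.add_apply]
    linarith
end

section
/- Let 𝐌 have the strong Monge property and suppose for row indices i < k and column indices j < l both M̄_{ij} + M̄_{kl} ≤ M̲_{il} + M̲_{kj} and M̄_{il} + M̄_{kj} ≤ M̲_{ij} + M̲_{kl} hold. Then for all rows o, p with i ≤ o < p ≤ k, the entries 𝐦_{oj}, 𝐦_{pj}, 𝐦_{ol}, 𝐦_{pl} are degenerate intervals (real numbers) and satisfy m_{oj} + m_{pl} = m_{ol} + m_{pj}. -/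
/-- StrongMonge implies the pointwise extreme inequality. -/
lemma strongMonge_key {m n : ℕ} (L U : Matrix (Fin m) (Fin n) ℝ)
    (hLU : ∀ i j, L i j ≤ U i j) (hSM : StrongMonge L U)
    (a b : Fin m) (c d : Fin n) (hab : a < b) (hcd : c < d) :
    U a c + U b d ≤ L a d + L b c := by
  classical
  set M : Matrix (Fin m) (Fin n) ℝ :=
    fun x y => if (x = a ∧ y = c) ∨ (x = b ∧ y = d) then U x y else L x y with hM
  have hIn : InInterval L U M := by
    intro x y
    simp only [hM]
    split
    · exact ⟨hLU x y, le_refl _⟩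
    · exact ⟨le_refl _, hLU x y⟩
  have hMon := hSM M hIn a b c d hab hcd
  have e1 : M a c = U a c := by simp [hM]
  have e2 : M b d = U b d := by simp [hM]
  have e3 : M a d = L a d := by
    simp only [hM]
    rw [if_neg]
    rintro (⟨_, h⟩ | ⟨h, _⟩)
    · exact hcd.ne' h
    · exact hab.ne h
  have e4 : M b c = L b c := by
    simp only [hM]
    rw [if_neg]
    rintro (⟨h, _⟩ | ⟨_, h⟩)
    · exact hab.ne' h
    · exact hcd.ne h
  rw [e1, e2, e3, e4] at hMon
  exact hMon

theorem strongMonge_ambiguous_degenerate {m n : ℕ} (L U : Matrix (Fin m) (Fin n) ℝ)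
    (hLU : ∀ i j, L i j ≤ U i j) (hSM : StrongMonge L U)
    (i k : Fin m) (j l : Fin n) (hik : i < k) (hjl : j < l)
    (h1 : U i j + U k l ≤ L i l + L k j)
    (h2 : U i l + U k j ≤ L i j + L k l) :
    ∀ o p : Fin m, i ≤ o → o < p → p ≤ k →
      (L o j = U o j ∧ L p j = U p j ∧ L o l = U o l ∧ L p l = U p l) ∧
        L o j + L p l = L o l + L p j := by
  have key := strongMonge_key L U hLU hSM
  -- corner degeneracy
  have eij : L i j = U i j := by
    have := hLU i j; have := hLU i l; have := hLU k j; have := hLU k l; linarith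
  have eil : L i l = U i l := by
    have := hLU i j; have := hLU i l; have := hLU k j; have := hLU k l; linarith
  have ekj : L k j = U k j := by
    have := hLU i j; have := hLU i l; have := hLU k j; have := hLU k l; linarith
  have ekl : L k l = U k l := by
    have := hLU i j; have := hLU i l; have := hLU k j; have := hLU k l; linarith
  intro o p hio hop hpk
  have k1 : U o j + U p l ≤ L o l + L p j := key o p j l hop hjl
  have k2 : U i j + U o l ≤ L i l + L o j := by
    rcases hio.lt_or_eq with h | h
    · exact key i o j l h hjl
    · subst h; linarith
  have k3 : U p j + U k l ≤ L p l + L k j := by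
    rcases hpk.lt_or_eq with h | h
    · exact key p k j l h hjl
    · subst h; linarith
  have a1 := hLU o j
  have a2 := hLU o l
  have a3 := hLU p j
  have a4 := hLU p l
  refine ⟨⟨by linarith, by linarith, by linarith, by linarith⟩, by linarith⟩
end

section
/- Let 𝐌 ∈ 𝕀ℝ^{m×n} have the strong Monge property, and let 1 ≤ b and B with b < n − B + 1 ≤ n. Then for every pair of rows i < k: B·(Σ_{j=1}^{b} M̄_{ij}) − b·(Σ_{l=n−B+1}^{n} M̲_{il}) ≤ B·(Σ_{j=1}^{b} M̲_{kj}) − b·(Σ_{l=n−B+1}^{n} M̄_{kl}). -/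
theorem strongMonge_pointwise {m n : ℕ} (L U : Matrix (Fin m) (Fin n) ℝ)
    (hSM : StrongMonge L U) (hLU : ∀ i j, L i j ≤ U i j)
    (i k : Fin m) (j l : Fin n) (hik : i < k) (hjl : j < l) :
    U i j + U k l ≤ L i l + L k j := by
  set M : Matrix (Fin m) (Fin n) ℝ := fun p q =>
    if p = i ∧ q = j then U i j else if p = k ∧ q = l then U k l else L p q with hM
  have hIn : InInterval L U M := by
    intro p q
    simp only [hM]
    split_ifs with h1 h2
    · obtain ⟨rfl, rfl⟩ := h1; exact ⟨hLU _ _, le_refl _⟩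
    · obtain ⟨rfl, rfl⟩ := h2; exact ⟨hLU _ _, le_refl _⟩
    · exact ⟨le_refl _, hLU _ _⟩
  have hMonge := hSM M hIn i k j l hik hjl
  have hik' : i ≠ k := ne_of_lt hik
  have hjl' : j ≠ l := ne_of_lt hjl
  have e1 : M i j = U i j := by simp [hM]
  have e2 : M k l = U k l := by simp [hM, hik'.symm]
  have e3 : M i l = L i l := by simp [hM, hjl, hjl'.symm, hik']
  have e4 : M k j = L k j := by simp [hM, hik'.symm, hjl']
  rw [e1, e2, e3, e4] at hMonge
  exact hMonge

theorem strongMonge_block_sum_ineq {m n : ℕ} (L U : Matrix (Fin m) (Fin n) ℝ)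
    (hSM : StrongMonge L U) (hLU : ∀ i j, L i j ≤ U i j)
    (b B : ℕ) (hb : 1 ≤ b) (hbB : b < n - B + 1) (hB : n - B + 1 ≤ n) :
    ∀ i k : Fin m, i < k →
      (B : ℝ) * (∑ j ∈ Finset.univ.filter (fun j : Fin n => j.val < b), U i j) -
          (b : ℝ) * (∑ l ∈ Finset.univ.filter (fun l : Fin n => n - B ≤ l.val), L i l) ≤
        (B : ℝ) * (∑ j ∈ Finset.univ.filter (fun j : Fin n => j.val < b), L k j) -
          (b : ℝ) * (∑ l ∈ Finset.univ.filter (fun l : Fin n => n - B ≤ l.val), U k l) := by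
  intro i k hik
  set S1 := Finset.univ.filter (fun j : Fin n => j.val < b) with hS1
  set S2 := Finset.univ.filter (fun l : Fin n => n - B ≤ l.val) with hS2
  have hbn : b < n := by omega
  have hnBn : n - B < n := by omega
  have hcard1 : S1.card = b := by
    have : S1 = Finset.Iio (⟨b, hbn⟩ : Fin n) := by
      ext x; simp [hS1, Fin.lt_def]
    rw [this, Fin.card_Iio]
  have hcard2 : S2.card = B := by
    have : S2 = Finset.Ici (⟨n - B, hnBn⟩ : Fin n) := by
      ext x; simp [hS2, Fin.le_def]
    rw [this, Fin.card_Ici]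
    simp only [Fin.val_mk]
    omega
  have hsum : ∑ j ∈ S1, ∑ l ∈ S2, (U i j + U k l) ≤ ∑ j ∈ S1, ∑ l ∈ S2, (L i l + L k j) := by
    refine Finset.sum_le_sum fun j hj => Finset.sum_le_sum fun l hl => ?_
    have hj' : (j : ℕ) < b := by simpa [hS1] using hj
    have hl' : n - B ≤ (l : ℕ) := by simpa [hS2] using hl
    exact strongMonge_pointwise L U hSM hLU i k j l hik (by rw [Fin.lt_def]; omega)
  have expandL : ∑ j ∈ S1, ∑ l ∈ S2, (U i j + U k l)
      = (B : ℝ) * ∑ j ∈ S1, U i j + (b : ℝ) * ∑ l ∈ S2, U k l := by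
    simp only [Finset.sum_add_distrib, Finset.sum_const, nsmul_eq_mul, hcard1, hcard2,
      ← Finset.sum_mul, ← Finset.mul_sum]
  have expandR : ∑ j ∈ S1, ∑ l ∈ S2, (L i l + L k j)
      = (b : ℝ) * ∑ l ∈ S2, L i l + (B : ℝ) * ∑ j ∈ S1, L k j := by
    simp only [Finset.sum_add_distrib, Finset.sum_const, nsmul_eq_mul, hcard1, hcard2,
      ← Finset.sum_mul, ← Finset.mul_sum]
  rw [expandL, expandR] at hsum
  linarith
end
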